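/- (Monotone increasing norm in phase I) Let 0 < η < 1/β and let the plain gradient-descent iterates be defined by z_{t+1} = z_t − η(Hz_t + g) from the initialization z₀ = −α·g/‖g‖₂ where g ≠ 0, 0 < α < 1, and α·|gᵀHg| < ‖g‖₂³. Then for every t ≥ 0 one has z_tᵀ(Hz_t + g) ≤ 0, and consequently ‖z_{t+1}‖₂ ≥ ‖z_t‖₂, i.e. the norms of the iterates are monotone nondecreasing. -/

import Mathlib

open Matrix

/-- The Euclidean (`ℓ₂`) norm of a vector in `ℝⁿ`. -/
noncomputable def enorm₂ {n : ℕ} (x : Fin n → ℝ) : ℝ := Real.sqrt (∑ i, x i ^ 2)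

/-- `β` is the (Euclidean) operator norm of `H`: the least nonnegative constant `c`
with `‖Hx‖₂ ≤ c ‖x‖₂` for all `x`. -/
def IsOpNorm {n : ℕ} (H : Matrix (Fin n) (Fin n) ℝ) (β : ℝ) : Prop :=
  IsLeast {c : ℝ | 0 ≤ c ∧ ∀ x : Fin n → ℝ, enorm₂ (H.mulVec x) ≤ c * enorm₂ x} β

/-!
In an orthonormal eigenbasis of `H` the iteration decouples into scalar recursions
`x_{t+1} = x_t - η (l x_t + γ)`, `x_0 = -c γ` with `c = α / ‖g‖`. Along each of them the
gradient `l x_t + γ = (1 - η l)^t (1 - c l) γ` keeps its sign, `x_t γ ≤ 0`, and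
`x_{t+1} (l x_{t+1} + γ) = (1 - η l) (x_t (l x_t + γ) - η (l x_t + γ)^2)`.
With `ρ = max (1 - η/c) 0` the factor `1 - η l - ρ` has the sign of `1 - c l`, hence the
opposite sign of `x_t (l x_t + γ)`, so every coordinate term shrinks at least by the uniform
factor `ρ ≥ 0`. Summing, `z_{t+1}ᵀ∇f(z_{t+1}) ≤ ρ z_tᵀ∇f(z_t)`, and the hypothesis on `α` gives
`z_0ᵀ∇f(z_0) ≤ 0`. Finally
`‖z_t - η∇f(z_t)‖² = ‖z_t‖² - 2η z_tᵀ∇f(z_t) + η²‖∇f(z_t)‖² ≥ ‖z_t‖²`.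
-/

section Scalar

variable {η l γ c ρ : ℝ} {x : ℕ → ℝ}

theorem scalarGD_grad_eq_pow_mul (hx0 : x 0 = -c * γ)
    (hx : ∀ t, x (t + 1) = x t - η * (l * x t + γ))
    (t : ℕ) : l * x t + γ = (1 - η * l) ^ t * ((1 - c * l) * γ) := by
  induction t with
  | zero => rw [hx0]; ring
  | succ t ih => rw [hx, pow_succ]; linear_combination (1 - η * l) * ih

theorem scalarGD_mul_nonpos (hx0 : x 0 = -c * γ)
    (hx : ∀ t, x (t + 1) = x t - η * (l * x t + γ))
    (hc : 0 ≤ c) (hη : 0 ≤ η) (hηl : η * l ≤ 1) (t : ℕ) : x t * γ ≤ 0 := by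
  induction t with
  | zero => rw [hx0]; nlinarith [sq_nonneg γ]
  | succ t ih =>
    rw [hx]
    nlinarith [mul_nonneg hη (sq_nonneg γ), mul_nonneg (sub_nonneg.2 hηl) (neg_nonneg.2 ih)]

theorem scalarGD_mul_grad_succ_le (hx0 : x 0 = -c * γ)
    (hx : ∀ t, x (t + 1) = x t - η * (l * x t + γ))
    (hc : 0 ≤ c) (hη : 0 ≤ η) (hηl : η * l ≤ 1) (hρ : 0 ≤ (1 - η * l - ρ) * (1 - c * l))
    (t : ℕ) : x (t + 1) * (l * x (t + 1) + γ) ≤ ρ * (x t * (l * x t + γ)) := by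
  have hgrad : l * x (t + 1) + γ = (1 - η * l) * (l * x t + γ) := by rw [hx]; ring
  have hsign : (1 - η * l - ρ) * (x t * (l * x t + γ)) ≤ 0 := by
    rw [scalarGD_grad_eq_pow_mul hx0 hx t]
    have := mul_nonpos_of_nonneg_of_nonpos
      (mul_nonneg hρ (pow_nonneg (sub_nonneg.2 hηl) t)) (scalarGD_mul_nonpos hx0 hx hc hη hηl t)
    linarith
  rw [hgrad, hx]
  nlinarith [mul_nonneg (mul_nonneg (sub_nonneg.2 hηl) hη) (sq_nonneg (l * x t + γ))]

theorem sub_max_mul_one_sub_nonneg (hc : 0 < c) (hη : 0 < η) (hηl : η * l ≤ 1) :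
    0 ≤ (1 - η * l - max (1 - η / c) 0) * (1 - c * l) := by
  rcases le_or_gt (c * l) 1 with hcl | hcl
  · have : η * l ≤ η / c := by rw [le_div_iff₀ hc]; nlinarith
    exact mul_nonneg (by rw [sub_nonneg, max_le_iff]; constructor <;> linarith) (by linarith)
  · have : η / c ≤ η * l := by rw [div_le_iff₀ hc]; nlinarith
    exact mul_nonneg_of_nonpos_of_nonpos (by linarith [le_max_left (1 - η / c) 0]) (by linarith)

end Scalar

section Euclidean

variable {n : ℕ}

theorem enorm₂_eq_sqrt_dotProduct (x : Fin n → ℝ) : enorm₂ x = √(x ⬝ᵥ x) := by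
  simp only [enorm₂, dotProduct, sq]

theorem enorm₂_sq (x : Fin n → ℝ) : enorm₂ x ^ 2 = x ⬝ᵥ x := by
  rw [enorm₂_eq_sqrt_dotProduct]
  exact Real.sq_sqrt (dotProduct_self_star_nonneg x)

theorem enorm₂_smul (s : ℝ) (x : Fin n → ℝ) : enorm₂ (s • x) = |s| * enorm₂ x := by
  rw [enorm₂_eq_sqrt_dotProduct, enorm₂_eq_sqrt_dotProduct, dotProduct_smul, smul_dotProduct,
    smul_smul, smul_eq_mul, ← sq, Real.sqrt_mul (sq_nonneg s), Real.sqrt_sq_eq_abs]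

theorem enorm₂_pos {x : Fin n → ℝ} (hx : x ≠ 0) : 0 < enorm₂ x := by
  rw [enorm₂_eq_sqrt_dotProduct, Real.sqrt_pos]
  exact lt_of_le_of_ne (dotProduct_self_star_nonneg x) (Ne.symm (dotProduct_self_eq_zero.not.2 hx))

theorem enorm₂_le_enorm₂_sub_smul {x r : Fin n → ℝ} {η : ℝ} (hη : 0 ≤ η) (hxr : x ⬝ᵥ r ≤ 0) :
    enorm₂ x ≤ enorm₂ (x - η • r) := by
  rw [enorm₂_eq_sqrt_dotProduct, enorm₂_eq_sqrt_dotProduct]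
  refine Real.sqrt_le_sqrt ?_
  have hexpand : (x - η • r) ⬝ᵥ (x - η • r) = x ⬝ᵥ x - 2 * η * (x ⬝ᵥ r) + η ^ 2 * (r ⬝ᵥ r) := by
    simp only [sub_dotProduct, dotProduct_sub, smul_dotProduct, dotProduct_smul, smul_eq_mul,
      dotProduct_comm r x]
    ring
  have hrr : 0 ≤ r ⬝ᵥ r := dotProduct_self_star_nonneg r
  rw [hexpand]
  nlinarith [mul_nonneg (sq_nonneg η) hrr, mul_nonneg hη (neg_nonneg.2 hxr)]

theorem IsOpNorm.abs_le_of_mulVec_eq_smul {H : Matrix (Fin n) (Fin n) ℝ} {β μ : ℝ}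
    {v : Fin n → ℝ} (hβ : IsOpNorm H β) (hv : H *ᵥ v = μ • v) (hv0 : v ≠ 0) : |μ| ≤ β := by
  have := hβ.1.2 v
  rw [hv, enorm₂_smul] at this
  exact le_of_mul_le_mul_right this (enorm₂_pos hv0)

end Euclidean

section Diagonalization

variable {n : ℕ} {H V : Matrix (Fin n) (Fin n) ℝ}

theorem Matrix.IsHermitian.exists_orthogonal_mul_eq_diagonal_mul (hH : H.IsHermitian) :
    ∃ V : Matrix (Fin n) (Fin n) ℝ, Vᵀ * V = 1 ∧ V * H = diagonal hH.eigenvalues * V := by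
  set U : Matrix (Fin n) (Fin n) ℝ := (hH.eigenvectorUnitary : Matrix (Fin n) (Fin n) ℝ)
  have hUU : star U * U = 1 := Unitary.coe_star_mul_self hH.eigenvectorUnitary
  have hspec : H = U * diagonal hH.eigenvalues * star U := by simpa using hH.spectral_theorem
  refine ⟨star U, ?_, ?_⟩
  · rw [star_eq_conjTranspose, conjTranspose_eq_transpose_of_trivial, transpose_transpose]
    exact (mem_unitaryGroup_iff).mp hH.eigenvectorUnitary.2
  · conv_lhs => rw [hspec, ← Matrix.mul_assoc, ← Matrix.mul_assoc, hUU, Matrix.one_mul]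

theorem dotProduct_mulVec_mulVec_of_transpose_mul_self (hV : Vᵀ * V = 1) (x y : Fin n → ℝ) :
    V *ᵥ x ⬝ᵥ V *ᵥ y = x ⬝ᵥ y := by
  rw [dotProduct_mulVec, ← mulVec_transpose, mulVec_mulVec, hV, one_mulVec]

end Diagonalization

section GradientDescent

variable {n : ℕ} {H V : Matrix (Fin n) (Fin n) ℝ} {μ g : Fin n → ℝ} {η c : ℝ}
  {z : ℕ → Fin n → ℝ}

theorem dotProduct_grad_eq_sum (hV : Vᵀ * V = 1) (hVH : V * H = diagonal μ * V)
    (x : Fin n → ℝ) :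
    x ⬝ᵥ (H *ᵥ x + g) = ∑ i, (V *ᵥ x) i * (μ i * (V *ᵥ x) i + (V *ᵥ g) i) := by
  rw [← dotProduct_mulVec_mulVec_of_transpose_mul_self hV, mulVec_add, mulVec_mulVec, hVH,
    ← mulVec_mulVec]
  simp only [dotProduct, Pi.add_apply, mulVec_diagonal]

theorem mulVec_gd_succ_apply (hVH : V * H = diagonal μ * V)
    (hrec : ∀ s, z (s + 1) = z s - η • (H *ᵥ z s + g)) (t : ℕ) (i : Fin n) :
    (V *ᵥ z (t + 1)) i = (V *ᵥ z t) i - η * (μ i * (V *ᵥ z t) i + (V *ᵥ g) i) := by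
  rw [hrec, mulVec_sub, mulVec_smul, mulVec_add, mulVec_mulVec, hVH, ← mulVec_mulVec]
  simp only [Pi.sub_apply, Pi.smul_apply, Pi.add_apply, mulVec_diagonal, smul_eq_mul]

theorem neg_smul_dotProduct_grad_nonpos (hc : 0 ≤ c) (h : c * (g ⬝ᵥ H *ᵥ g) ≤ g ⬝ᵥ g) :
    (-c) • g ⬝ᵥ (H *ᵥ ((-c) • g) + g) ≤ 0 := by
  have hexpand : (-c) • g ⬝ᵥ (H *ᵥ ((-c) • g) + g) = c * (c * (g ⬝ᵥ H *ᵥ g) - g ⬝ᵥ g) := by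
    simp only [mulVec_smul, smul_dotProduct, dotProduct_add, dotProduct_smul, smul_eq_mul]
    ring
  rw [hexpand]
  exact mul_nonpos_of_nonneg_of_nonpos hc (by linarith)

theorem gd_dotProduct_grad_nonpos (hV : Vᵀ * V = 1) (hVH : V * H = diagonal μ * V)
    (hc : 0 < c) (hη : 0 < η) (hμ : ∀ i, η * μ i ≤ 1)
    (hz0 : z 0 = (-c) • g) (hrec : ∀ s, z (s + 1) = z s - η • (H *ᵥ z s + g))
    (h0 : z 0 ⬝ᵥ (H *ᵥ z 0 + g) ≤ 0) (t : ℕ) : z t ⬝ᵥ (H *ᵥ z t + g) ≤ 0 := by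
  set ρ := max (1 - η / c) 0
  have hstep (s : ℕ) : z (s + 1) ⬝ᵥ (H *ᵥ z (s + 1) + g) ≤ ρ * (z s ⬝ᵥ (H *ᵥ z s + g)) := by
    simp only [dotProduct_grad_eq_sum hV hVH, Finset.mul_sum]
    refine Finset.sum_le_sum fun i _ => ?_
    refine scalarGD_mul_grad_succ_le (x := fun r => (V *ᵥ z r) i) ?_
      (mulVec_gd_succ_apply hVH hrec · i) hc.le hη.le (hμ i)
      (sub_max_mul_one_sub_nonneg hc hη (hμ i)) s
    rw [hz0, mulVec_smul, Pi.smul_apply, smul_eq_mul]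
  induction t with
  | zero => exact h0
  | succ t ih => exact (hstep t).trans (mul_nonpos_of_nonneg_of_nonpos (le_max_right _ _) ih)

end GradientDescent

theorem phaseI_norm_monotone_increasing_general {n : ℕ}
    (H : Matrix (Fin n) (Fin n) ℝ) (hH : H.IsSymm) (g : Fin n → ℝ)
    (β : ℝ) (hβ : IsOpNorm H β)
    (η : ℝ) (hη_pos : 0 < η) (hη_lt : η < 1 / β)
    (α : ℝ) (hα_pos : 0 < α)
    (hα_g : α * |g ⬝ᵥ H.mulVec g| < (enorm₂ g) ^ 3)
    (z : ℕ → Fin n → ℝ)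
    (hz0 : z 0 = (-(α / enorm₂ g)) • g)
    (hrec : ∀ s, z (s + 1) = z s - η • (H.mulVec (z s) + g)) :
    ∀ t : ℕ, z t ⬝ᵥ (H.mulVec (z t) + g) ≤ 0 ∧ enorm₂ (z t) ≤ enorm₂ (z (t + 1)) := by
  have hG : 0 < enorm₂ g := by
    have := (mul_nonneg hα_pos.le (abs_nonneg _)).trans_lt hα_g
    exact (Odd.pow_pos_iff (by decide : Odd 3)).1 this
  have hβ_pos : 0 < β := by
    by_contra! h
    linarith [one_div_nonpos.2 h]
  have hH' : H.IsHermitian := (conjTranspose_eq_transpose_of_trivial H).trans hH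
  obtain ⟨V, hV, hVH⟩ := hH'.exists_orthogonal_mul_eq_diagonal_mul
  have hημ (i : Fin n) : η * hH'.eigenvalues i ≤ 1 := by
    have hμβ := hβ.abs_le_of_mulVec_eq_smul (hH'.mulVec_eigenvectorBasis i)
      (by simpa using hH'.eigenvectorBasis.orthonormal.ne_zero i)
    nlinarith [le_abs_self (hH'.eigenvalues i), (lt_div_iff₀ hβ_pos).1 hη_lt]
  have h0 : z 0 ⬝ᵥ (H *ᵥ z 0 + g) ≤ 0 := by
    rw [hz0]
    refine neg_smul_dotProduct_grad_nonpos (div_pos hα_pos hG).le ?_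
    rw [← enorm₂_sq, div_mul_eq_mul_div, div_le_iff₀ hG]
    calc α * (g ⬝ᵥ H *ᵥ g) ≤ α * |g ⬝ᵥ H *ᵥ g| :=
          mul_le_mul_of_nonneg_left (le_abs_self _) hα_pos.le
      _ ≤ enorm₂ g ^ 2 * enorm₂ g := by linarith [pow_succ (enorm₂ g) 2]
  intro t
  have hT := gd_dotProduct_grad_nonpos hV hVH (div_pos hα_pos hG) hη_pos hημ hz0 hrec h0 t
  exact ⟨hT, hrec t ▸ enorm₂_le_enorm₂_sub_smul hη_pos.le hT⟩

/-- (Monotone increasing norm in phase I.) For plain gradient descent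
`z_{t+1} = z_t − η (H z_t + g)` with `0 < η < 1/β`, initialized at `z₀ = −α g/‖g‖`
with `0 < α < 1`, `α |gᵀHg| < ‖g‖³`: for every `t`, `z_tᵀ(H z_t + g) ≤ 0`, and
consequently `‖z_{t+1}‖₂ ≥ ‖z_t‖₂`. -/
theorem phaseI_norm_monotone_increasing {n : ℕ}
    (H : Matrix (Fin n) (Fin n) ℝ) (hH : H.IsSymm) (g : Fin n → ℝ) (hg : g ≠ 0)
    (β : ℝ) (hβ : IsOpNorm H β)
    (η : ℝ) (hη_pos : 0 < η) (hη_lt : η < 1 / β)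
    (α : ℝ) (hα_pos : 0 < α) (hα_lt : α < 1)
    (hα_g : α * |g ⬝ᵥ H.mulVec g| < (enorm₂ g) ^ 3)
    (z : ℕ → Fin n → ℝ)
    (hz0 : z 0 = (-(α / enorm₂ g)) • g)
    (hrec : ∀ s, z (s + 1) = z s - η • (H.mulVec (z s) + g)) :
    ∀ t : ℕ, z t ⬝ᵥ (H.mulVec (z t) + g) ≤ 0 ∧ enorm₂ (z t) ≤ enorm₂ (z (t + 1)) :=
  phaseI_norm_monotone_increasing_general H hH g β hβ η hη_pos hη_lt α hα_pos hα_g z hz0 hrec
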